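/- arXiv:1907.01736 — 4 statements merged into one kernel-verified Lean document; each statement's English description precedes it below -/
import Mathlib

section
/- (Sklar's theorem, existence direction) Let m ≥ 2 and let μ be a probability measure on ℝ^m with joint distribution function F(t) = μ{x : x_i ≤ t_i for all i} and marginal distribution functions F_i(s) = μ{x : x_i ≤ s}. Then there exists an m-copula C : [0,1]^m → [0,1] (grounded, with uniform margins, and m-increasing) such that for every t ∈ ℝ^m, F(t_1,…,t_m) = C(F_1(t_1),…,F_m(t_m)). -/
open Finset MeasureTheory

/-- `C` is grounded on `[0,1]^m`: it vanishes whenever some coordinate is `0`. -/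
def Grounded (m : ℕ) (C : (Fin m → ℝ) → ℝ) : Prop :=
  ∀ u : Fin m → ℝ, (∀ i, u i ∈ Set.Icc (0 : ℝ) 1) → (∃ i, u i = 0) → C u = 0

/-- `C` has uniform margins: `C(1,…,1,uᵢ,1,…,1) = uᵢ`. -/
def UniformMargins (m : ℕ) (C : (Fin m → ℝ) → ℝ) : Prop :=
  ∀ i : Fin m, ∀ s ∈ Set.Icc (0 : ℝ) 1, C (Function.update (fun _ => (1 : ℝ)) i s) = s

/-- `C` is `m`-increasing: every `C`-volume of a box `[u, v] ⊆ [0,1]^m` is nonnegative. -/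
def MIncreasing (m : ℕ) (C : (Fin m → ℝ) → ℝ) : Prop :=
  ∀ u v : Fin m → ℝ, (∀ i, u i ∈ Set.Icc (0 : ℝ) 1) → (∀ i, v i ∈ Set.Icc (0 : ℝ) 1) →
    (∀ i, u i ≤ v i) →
    0 ≤ ∑ S : Finset (Fin m), (-1 : ℝ) ^ S.card * C (fun i => if i ∈ S then u i else v i)

/-!
For a law `ρ` on `ℝ` with cdf `F`, let `s ∼ ρ` and `v` uniform on `[0,1]` be independent. The
distributional transform `F(s-) + v (F(s) - F(s-))` is uniform on `[0,1]`, and almost surely it is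
`≤ F t` exactly when `s ≤ t`: the first event contains the second and both have probability `F t`.
Transforming every coordinate of `x ∼ μ` with one shared `v` yields a law `ν` with uniform marginals
whose distribution function `C` satisfies `C(F₁(t₁), …, Fₘ(tₘ)) = F(t)`. The distribution function
of a law with uniform marginals is a copula, its `C`-volumes being
`∫ ∏ᵢ (1[yᵢ ≤ vᵢ] - 1[yᵢ ≤ uᵢ]) dν ≥ 0`.
-/

open ProbabilityTheory Set Filter Function
open scoped ENNReal

namespace ProbabilityTheory

instance isProbabilityMeasure_volume_restrict_Icc_zero_one :
    IsProbabilityMeasure (volume.restrict (Icc (0 : ℝ) 1)) :=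
  ⟨by simp⟩

section Interpolation

variable {a b u : ℝ}

lemma volume_Icc_zero_one_setOf_add_mul_le_eq_one (hab : a ≤ b) (hbu : b ≤ u) :
    volume.restrict (Icc (0 : ℝ) 1) {v | a + v * (b - a) ≤ u} = 1 := by
  rw [Measure.restrict_apply_superset fun v hv => ?_, Real.volume_Icc, sub_zero,
    ENNReal.ofReal_one]
  have : v * (b - a) ≤ b - a := mul_le_of_le_one_left (sub_nonneg.2 hab) hv.2
  simp only [mem_ofPred_eq]
  linarith

lemma volume_Icc_zero_one_setOf_add_mul_le_eq_zero (hab : a ≤ b) (hua : u ≤ a) (hub : u < b) :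
    volume.restrict (Icc (0 : ℝ) 1) {v | a + v * (b - a) ≤ u} = 0 := by
  rw [Measure.restrict_apply' measurableSet_Icc]
  refine measure_mono_null (t := {0}) (fun v ⟨hv, hv01⟩ => ?_) Real.volume_singleton
  simp only [mem_ofPred_eq] at hv
  simp only [mem_singleton_iff]
  nlinarith [hv01.1, mul_nonneg hv01.1 (sub_nonneg.2 hab)]

lemma ofReal_mul_volume_Icc_zero_one_setOf_add_mul_le (hau : a ≤ u) (hub : u ≤ b) :
    ENNReal.ofReal (b - a) * volume.restrict (Icc (0 : ℝ) 1) {v | a + v * (b - a) ≤ u}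
      = ENNReal.ofReal (u - a) := by
  rcases hau.trans hub |>.eq_or_lt with rfl | hab
  · rw [le_antisymm hub hau, sub_self, ENNReal.ofReal_zero, zero_mul]
  have hba : 0 < b - a := sub_pos.2 hab
  have hset : {v | a + v * (b - a) ≤ u} ∩ Icc 0 1 = Icc 0 ((u - a) / (b - a)) := by
    ext v
    simp only [mem_inter_iff, mem_ofPred_eq, Set.mem_Icc, le_div_iff₀ hba]
    constructor
    · rintro ⟨h, h0, -⟩
      exact ⟨h0, by linarith⟩
    · rintro ⟨h0, h⟩
      refine ⟨by linarith, h0, ?_⟩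
      nlinarith
  rw [Measure.restrict_apply' measurableSet_Icc, hset, Real.volume_Icc, sub_zero,
    ← ENNReal.ofReal_mul hba.le, mul_div_cancel₀ _ hba.ne']

end Interpolation

noncomputable def distribTransform (ρ : Measure ℝ) (p : ℝ × ℝ) : ℝ :=
  leftLim (cdf ρ) p.1 + p.2 * (cdf ρ p.1 - leftLim (cdf ρ) p.1)

section DistribTransform

variable (ρ : Measure ℝ)

lemma measurable_distribTransform : Measurable (distribTransform ρ) := by
  have hF : Measurable (cdf ρ) := (monotone_cdf ρ).measurable
  have hF' : Measurable (leftLim (cdf ρ)) := (monotone_cdf ρ).leftLim.measurable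
  unfold distribTransform
  fun_prop

lemma distribTransform_le_cdf {p : ℝ × ℝ} (hp : p.2 ≤ 1) : distribTransform ρ p ≤ cdf ρ p.1 := by
  have : p.2 * (cdf ρ p.1 - leftLim (cdf ρ) p.1) ≤ cdf ρ p.1 - leftLim (cdf ρ) p.1 :=
    mul_le_of_le_one_left (sub_nonneg.2 ((monotone_cdf ρ).leftLim_le le_rfl)) hp
  rw [distribTransform]
  linarith

variable [IsProbabilityMeasure ρ]

lemma measure_Iio_eq_ofReal_leftLim_cdf (x : ℝ) :
    ρ (Iio x) = ENNReal.ofReal (leftLim (cdf ρ) x) := by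
  simpa [measure_cdf] using (cdf ρ).measure_Iio (tendsto_cdf_atBot ρ) x

lemma measure_singleton_eq_ofReal_cdf_sub_leftLim (x : ℝ) :
    ρ {x} = ENNReal.ofReal (cdf ρ x - leftLim (cdf ρ) x) := by
  simpa [measure_cdf] using (cdf ρ).measure_singleton x

lemma lintegral_volume_setOf_distribTransform_le_of_threshold {u b : ℝ}
    (hlt : ∀ s < b, cdf ρ s ≤ u) (hgt : ∀ s, b < s → u < cdf ρ s) :
    ∫⁻ s, volume.restrict (Icc (0 : ℝ) 1) {v | distribTransform ρ (s, v) ≤ u} ∂ρ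
      = ENNReal.ofReal u := by
  set f := fun s => volume.restrict (Icc (0 : ℝ) 1) {v | distribTransform ρ (s, v) ≤ u}
  have hF := monotone_cdf ρ
  have hleft : leftLim (cdf ρ) b ≤ u :=
    le_of_tendsto (hF.tendsto_leftLim b) (eventually_nhdsWithin_of_forall hlt)
  have hright : u ≤ cdf ρ b :=
    ge_of_tendsto ((cdf ρ).right_continuous b |>.mono Ioi_subset_Ici_self)
      (eventually_nhdsWithin_of_forall fun s hs => (hgt s hs).le)
  have hIio : ∫⁻ s in Iio b, f s ∂ρ = ENNReal.ofReal (leftLim (cdf ρ) b) := by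
    rw [setLIntegral_congr_fun (f := f) (g := fun _ => 1) measurableSet_Iio fun s hs =>
      volume_Icc_zero_one_setOf_add_mul_le_eq_one (hF.leftLim_le le_rfl) (hlt s hs),
      setLIntegral_one, measure_Iio_eq_ofReal_leftLim_cdf]
  have hb : ∫⁻ s in {b}, f s ∂ρ = ENNReal.ofReal (u - leftLim (cdf ρ) b) := by
    rw [lintegral_singleton, measure_singleton_eq_ofReal_cdf_sub_leftLim, mul_comm]
    exact ofReal_mul_volume_Icc_zero_one_setOf_add_mul_le hleft hright
  have hIoi : ∫⁻ s in Ioi b, f s ∂ρ = 0 := by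
    refine (setLIntegral_congr_fun measurableSet_Ioi fun s hs => ?_).trans lintegral_zero
    obtain ⟨s', hbs', hs's⟩ := exists_between (mem_Ioi.1 hs)
    exact volume_Icc_zero_one_setOf_add_mul_le_eq_zero (hF.leftLim_le le_rfl)
      ((hgt s' hbs').le.trans (hF.le_leftLim hs's)) (hgt s hs)
  rw [← lintegral_add_compl f measurableSet_Iio, compl_Iio, ← Set.Ioi_insert,
    ← Set.singleton_union,
    lintegral_union measurableSet_Ioi (disjoint_singleton_left.2 (lt_irrefl b)), hIio, hb, hIoi,
    add_zero, ← ENNReal.ofReal_add ((cdf_nonneg ρ _).trans (hF.le_leftLim (sub_one_lt b)))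
      (sub_nonneg.2 hleft), add_sub_cancel]

lemma measure_prod_setOf_distribTransform_le {u : ℝ} (hu : u ∈ Icc (0 : ℝ) 1) :
    ρ.prod (volume.restrict (Icc (0 : ℝ) 1)) {p | distribTransform ρ p ≤ u}
      = ENNReal.ofReal u := by
  rw [Measure.prod_apply (measurableSet_le (measurable_distribTransform ρ) measurable_const)]
  change ∫⁻ s, volume.restrict (Icc (0 : ℝ) 1) {v | distribTransform ρ (s, v) ≤ u} ∂ρ = _
  have hF := monotone_cdf ρ
  set L := {s | cdf ρ s ≤ u}
  rcases L.eq_empty_or_nonempty with hL | hL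
  · have hgt (s : ℝ) : u < cdf ρ s := not_le.1 fun hs => hL.subset hs
    have hu0 : u = 0 :=
      le_antisymm (ge_of_tendsto' (tendsto_cdf_atBot ρ) fun s => (hgt s).le) hu.1
    rw [hu0, ENNReal.ofReal_zero]
    refine (lintegral_congr fun s => ?_).trans lintegral_zero
    exact volume_Icc_zero_one_setOf_add_mul_le_eq_zero (hF.leftLim_le le_rfl)
      ((cdf_nonneg ρ _).trans (hF.le_leftLim (sub_one_lt s))) (hu0 ▸ hgt s)
  by_cases hbdd : BddAbove L
  · refine lintegral_volume_setOf_distribTransform_le_of_threshold ρ (b := sSup L)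
      (fun s hs => ?_) fun s hs => not_le.1 fun hsL => absurd hs (not_lt.2 (le_csSup hbdd hsL))
    obtain ⟨x, hxL, hsx⟩ := exists_lt_of_lt_csSup hL hs
    exact (hF hsx.le).trans hxL
  · have hle (s : ℝ) : cdf ρ s ≤ u := by
      obtain ⟨x, hxL, hsx⟩ := not_bddAbove_iff.1 hbdd s
      exact (hF hsx.le).trans hxL
    have hu1 : u = 1 :=
      le_antisymm hu.2 (le_of_tendsto' (tendsto_cdf_atTop ρ) hle)
    rw [hu1, ENNReal.ofReal_one, lintegral_congr (g := fun _ => 1) fun s => ?_, lintegral_one,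
      measure_univ]
    exact volume_Icc_zero_one_setOf_add_mul_le_eq_one (hF.leftLim_le le_rfl) (hu1 ▸ hle s)

lemma ae_distribTransform_le_cdf_iff (t : ℝ) :
    ∀ᵐ p ∂ρ.prod (volume.restrict (Icc (0 : ℝ) 1)),
      distribTransform ρ p ≤ cdf ρ t ↔ p.1 ≤ t := by
  set P := ρ.prod (volume.restrict (Icc (0 : ℝ) 1))
  have hsub : Iic t ×ˢ Icc (0 : ℝ) 1 ⊆ {p | distribTransform ρ p ≤ cdf ρ t} :=
    fun p hp => (distribTransform_le_cdf ρ hp.2.2).trans (monotone_cdf ρ hp.1)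
  have hle : P {p | distribTransform ρ p ≤ cdf ρ t} ≤ P (Iic t ×ˢ Icc (0 : ℝ) 1) := by
    rw [measure_prod_setOf_distribTransform_le ρ ⟨cdf_nonneg ρ t, cdf_le_one ρ t⟩,
      Measure.prod_prod, ofReal_cdf]
    simp
  have hae : Iic t ×ˢ Icc (0 : ℝ) 1 =ᵐ[P] {p | distribTransform ρ p ≤ cdf ρ t} :=
    ae_eq_of_subset_of_measure_ge hsub hle
      (measurableSet_Iic.prod measurableSet_Icc).nullMeasurableSet (measure_ne_top _ _)
  have hsnd : ∀ᵐ p ∂P, p.2 ∈ Icc (0 : ℝ) 1 :=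
    Measure.quasiMeasurePreserving_snd.ae (ae_restrict_mem measurableSet_Icc)
  filter_upwards [eventuallyEq_set.1 hae, hsnd] with p hp hp2
  simpa [hp2] using hp.symm

end DistribTransform

def HasUniformMarginals {ι : Type*} (ν : Measure (ι → ℝ)) : Prop :=
  ∀ i, ∀ u ∈ Icc (0 : ℝ) 1, ν {y | y i ≤ u} = ENNReal.ofReal u

noncomputable def copulaTransform {ι : Type*} (μ : Measure (ι → ℝ)) (p : (ι → ℝ) × ℝ) : ι → ℝ :=
  fun i => distribTransform (μ.map (eval i)) (p.1 i, p.2)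

section CopulaTransform

variable {ι : Type*} (μ : Measure (ι → ℝ))

lemma measurable_copulaTransform : Measurable (copulaTransform μ) :=
  measurable_pi_lambda _ fun i =>
    (measurable_distribTransform _).comp ((measurable_pi_apply i).prodMap measurable_id)

variable [IsProbabilityMeasure μ]

instance : IsProbabilityMeasure
    ((μ.prod (volume.restrict (Icc (0 : ℝ) 1))).map (copulaTransform μ)) :=
  Measure.isProbabilityMeasure_map (measurable_copulaTransform μ).aemeasurable

lemma map_prod_map_eval_id (i : ι) :
    (μ.prod (volume.restrict (Icc (0 : ℝ) 1))).map (Prod.map (eval i) id)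
      = (μ.map (eval i)).prod (volume.restrict (Icc (0 : ℝ) 1)) := by
  rw [← Measure.map_prod_map _ _ (measurable_pi_apply i) measurable_id, Measure.map_id]

lemma hasUniformMarginals_map_copulaTransform :
    HasUniformMarginals ((μ.prod (volume.restrict (Icc (0 : ℝ) 1))).map (copulaTransform μ)) := by
  intro i u hu
  have := Measure.isProbabilityMeasure_map (μ := μ) (measurable_pi_apply i).aemeasurable
  have hG := measurable_distribTransform (μ.map (eval i))
  rw [Measure.map_apply (measurable_copulaTransform μ)
      (measurableSet_le (measurable_pi_apply i) measurable_const),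
    show copulaTransform μ ⁻¹' {y | y i ≤ u}
      = Prod.map (eval i) id ⁻¹' {p | distribTransform (μ.map (eval i)) p ≤ u} from rfl,
    ← Measure.map_apply ((measurable_pi_apply i).prodMap measurable_id)
      (measurableSet_le hG measurable_const), map_prod_map_eval_id]
  exact measure_prod_setOf_distribTransform_le _ hu

variable [Countable ι]

lemma ae_copulaTransform_le_cdf_iff (t : ι → ℝ) :
    ∀ᵐ p ∂μ.prod (volume.restrict (Icc (0 : ℝ) 1)),
      ∀ i, copulaTransform μ p i ≤ cdf (μ.map (eval i)) (t i) ↔ p.1 i ≤ t i := by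
  refine ae_all_iff.2 fun i => ?_
  have := Measure.isProbabilityMeasure_map (μ := μ) (measurable_pi_apply i).aemeasurable
  have h := ae_distribTransform_le_cdf_iff (μ.map (eval i)) (t i)
  rw [← map_prod_map_eval_id] at h
  exact ae_of_ae_map ((measurable_pi_apply i).prodMap measurable_id).aemeasurable h

lemma map_copulaTransform_Iic_cdf (t : ι → ℝ) :
    (μ.prod (volume.restrict (Icc (0 : ℝ) 1))).map (copulaTransform μ)
      (Iic fun i => cdf (μ.map (eval i)) (t i)) = μ (Iic t) := by
  rw [Measure.map_apply (measurable_copulaTransform μ) measurableSet_Iic]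
  calc _ = μ.prod (volume.restrict (Icc (0 : ℝ) 1)) (Iic t ×ˢ univ) := by
        refine measure_congr (eventuallyEq_set.2 ?_)
        filter_upwards [ae_copulaTransform_le_cdf_iff μ t] with p hp
        simp [Pi.le_def, hp]
    _ = μ (Iic t) := by rw [Measure.prod_prod, measure_univ, mul_one]

end CopulaTransform

section Copula

lemma indicator_Iic_pi {ι : Type*} [Fintype ι] (w y : ι → ℝ) :
    (Iic w).indicator 1 y = ∏ i, (Iic (w i)).indicator (1 : ℝ → ℝ) (y i) := by
  by_cases h : y ≤ w
  · rw [indicator_of_mem h, Pi.one_apply]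
    exact (Finset.prod_eq_one fun i _ => by simp [h i]).symm
  · obtain ⟨i, hi⟩ : ∃ i, ¬y i ≤ w i := by simpa [Pi.le_def] using h
    rw [indicator_of_notMem h]
    exact (Finset.prod_eq_zero (Finset.mem_univ i) (by simp [hi])).symm

lemma sum_neg_one_pow_mul_indicator_Iic {ι : Type*} [Fintype ι] [DecidableEq ι]
    (u v y : ι → ℝ) :
    ∑ S : Finset ι, (-1 : ℝ) ^ #S * (Iic fun i => if i ∈ S then u i else v i).indicator 1 y
      = ∏ i, ((Iic (v i)).indicator 1 (y i) - (Iic (u i)).indicator 1 (y i)) := by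
  rw [Finset.prod_sub, Finset.powerset_univ]
  refine Finset.sum_congr rfl fun S _ => ?_
  have hS : ∏ i ∈ S, (Iic (if i ∈ S then u i else v i)).indicator (1 : ℝ → ℝ) (y i)
      = ∏ i ∈ S, (Iic (u i)).indicator 1 (y i) :=
    Finset.prod_congr rfl fun i hi => by rw [if_pos hi]
  have hSc : ∏ i ∈ Sᶜ, (Iic (if i ∈ S then u i else v i)).indicator (1 : ℝ → ℝ) (y i)
      = ∏ i ∈ Sᶜ, (Iic (v i)).indicator 1 (y i) :=
    Finset.prod_congr rfl fun i hi => by rw [if_neg (Finset.mem_compl.1 hi)]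
  rw [indicator_Iic_pi, ← Finset.prod_mul_prod_compl S, ← Finset.compl_eq_univ_sdiff, hS, hSc]
  ring

variable {m : ℕ} (ν : Measure (Fin m → ℝ))

lemma mIncreasing_measureReal_Iic [IsFiniteMeasure ν] :
    MIncreasing m fun w => ν.real (Iic w) := by
  intro u v _ _ huv
  have hint (w : Fin m → ℝ) : Integrable ((Iic w).indicator 1) ν :=
    (integrable_const (1 : ℝ)).indicator measurableSet_Iic
  calc 0 ≤ ∫ y, ∏ i, ((Iic (v i)).indicator 1 (y i) - (Iic (u i)).indicator 1 (y i)) ∂ν :=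
        integral_nonneg fun y => Finset.prod_nonneg fun i _ => sub_nonneg.2 <|
          indicator_le_indicator_of_subset (Set.Iic_subset_Iic.2 (huv i)) (fun _ => zero_le_one) _
    _ = ∫ y, ∑ S : Finset (Fin m), (-1 : ℝ) ^ #S *
          (Iic fun i => if i ∈ S then u i else v i).indicator 1 y ∂ν := by
        simp_rw [sum_neg_one_pow_mul_indicator_Iic]
    _ = _ := by
        rw [integral_finsetSum _ fun S _ => (hint _).const_mul _]
        simp_rw [integral_const_mul, integral_indicator_one measurableSet_Iic]

variable {ν}

lemma HasUniformMarginals.grounded (hν : HasUniformMarginals ν) :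
    Grounded m fun w => ν.real (Iic w) := by
  rintro w - ⟨i, hi⟩
  have : ν (Iic w) = 0 := measure_mono_null (t := {y | y i ≤ 0})
    (fun y hy => (hy i).trans hi.le) (by simpa using hν i 0 ⟨le_rfl, zero_le_one⟩)
  simp [measureReal_def, this]

lemma HasUniformMarginals.uniformMargins [IsProbabilityMeasure ν] (hν : HasUniformMarginals ν) :
    UniformMargins m fun w => ν.real (Iic w) := by
  intro i s hs
  have hle_one : ∀ᵐ y ∂ν, ∀ j, y j ≤ 1 := by
    refine ae_all_iff.2 fun j => (ae_iff_measure_eq ?_).2 ?_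
    · exact (measurableSet_le (measurable_pi_apply j) measurable_const).nullMeasurableSet
    · rw [hν j 1 ⟨zero_le_one, le_rfl⟩, ENNReal.ofReal_one, measure_univ]
  have hae : Iic (update (fun _ => (1 : ℝ)) i s) =ᵐ[ν] {y | y i ≤ s} := by
    refine eventuallyEq_set.2 ?_
    filter_upwards [hle_one] with y hy
    refine ⟨fun h => by simpa using h i, fun h j => ?_⟩
    rcases eq_or_ne j i with rfl | hj
    · simpa using h
    · simpa [hj] using hy j
  show ν.real _ = s
  rw [measureReal_def, measure_congr hae, hν i s hs, ENNReal.toReal_ofReal hs.1]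

end Copula
end ProbabilityTheory

theorem sklar_existence_general
    (m : ℕ) (μ : Measure (Fin m → ℝ)) [IsProbabilityMeasure μ] :
    ∃ C : (Fin m → ℝ) → ℝ,
      (∀ u : Fin m → ℝ, (∀ i, u i ∈ Set.Icc (0 : ℝ) 1) → C u ∈ Set.Icc (0 : ℝ) 1) ∧
      Grounded m C ∧ UniformMargins m C ∧ MIncreasing m C ∧
      ∀ t : Fin m → ℝ,
        (μ {x | ∀ i, x i ≤ t i}).toReal = C (fun i => (μ {x | x i ≤ t i}).toReal) := by
  set ν := (μ.prod (volume.restrict (Icc (0 : ℝ) 1))).map (copulaTransform μ)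
  have hν : HasUniformMarginals ν := hasUniformMarginals_map_copulaTransform μ
  refine ⟨fun w => ν.real (Iic w), fun w _ => ⟨measureReal_nonneg, measureReal_le_one⟩,
    hν.grounded, hν.uniformMargins, mIncreasing_measureReal_Iic ν, fun t => ?_⟩
  have hcdf (i : Fin m) : (μ {x | x i ≤ t i}).toReal = cdf (μ.map (eval i)) (t i) := by
    have := Measure.isProbabilityMeasure_map (μ := μ) (measurable_pi_apply i).aemeasurable
    rw [cdf_eq_real, measureReal_def, Measure.map_apply (measurable_pi_apply i) measurableSet_Iic]
    rfl
  simp only [hcdf, measureReal_def, ν, map_copulaTransform_Iic_cdf]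
  rfl

/-- Sklar's theorem, existence direction. -/
theorem sklar_existence
    (m : ℕ) (hm : 2 ≤ m) (μ : Measure (Fin m → ℝ)) [IsProbabilityMeasure μ] :
    ∃ C : (Fin m → ℝ) → ℝ,
      (∀ u : Fin m → ℝ, (∀ i, u i ∈ Set.Icc (0 : ℝ) 1) → C u ∈ Set.Icc (0 : ℝ) 1) ∧
      Grounded m C ∧ UniformMargins m C ∧ MIncreasing m C ∧
      ∀ t : Fin m → ℝ,
        (μ {x | ∀ i, x i ≤ t i}).toReal = C (fun i => (μ {x | x i ≤ t i}).toReal) :=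
  sklar_existence_general m μ
end

section
/- (Sklar's theorem, converse direction) Let m ≥ 2, let ν be a probability measure on [0,1]^m each of whose one-dimensional marginals is the uniform distribution on [0,1], and let C(u) = ν{w : w_i ≤ u_i for all i} be its distribution function. Let F_1,…,F_m be distribution functions of probability measures on ℝ. Then there exists a probability measure μ on ℝ^m whose joint distribution function equals t ↦ C(F_1(t_1),…,F_m(t_m)) and whose i-th marginal distribution function is F_i for each i. -/
/-!
Push `ν` forward along `w ↦ (Q₁ w₁, …, Q_m w_m)`, where `Qᵢ u = inf {x | u ≤ Fᵢ x}` is the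
quantile function of `Fᵢ`. For `0 < u < 1` right-continuity of `Fᵢ` gives the Galois connection
`Qᵢ u ≤ t ↔ u ≤ Fᵢ t`, and `ν`-almost every point has all coordinates in `(0, 1)` because the
marginals are uniform. Hence the image of the orthant `{x ≤ t}` is, up to a `ν`-null set, the orthant
`{w ≤ (F₁ t₁, …, F_m t_m)}`, and each marginal is a uniform law pushed forward by `Qᵢ`, which is `Fᵢ`.
-/

open MeasureTheory ProbabilityTheory Set

lemma ae_restrict_Icc_mem_Ioo {μ : Measure ℝ} [NullSingletonClass μ] (a b : ℝ) :
    ∀ᵐ u ∂μ.restrict (Icc a b), u ∈ Ioo a b := by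
  rw [← Measure.restrict_congr_set Ioo_ae_eq_Icc]
  exact ae_restrict_mem measurableSet_Ioo

lemma volume_restrict_Icc_zero_one_Iic {c : ℝ} (hc : c ≤ 1) :
    volume.restrict (Icc (0 : ℝ) 1) (Iic c) = ENNReal.ofReal c := by
  have hinter : Iic c ∩ Icc 0 1 = Icc 0 c := Set.ext fun x => by
    simp only [mem_inter_iff, mem_Iic, mem_Icc]
    constructor <;> intro <;> grind
  rw [Measure.restrict_apply measurableSet_Iic, hinter, Real.volume_Icc, sub_zero]

namespace ProbabilityTheory

variable (p : Measure ℝ)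

/-- Meaningful for `0 < u < 1` only: for `u ≤ 0` and `u > 1` the infimum is the junk value `0`. -/
noncomputable def quantile (u : ℝ) : ℝ := sInf {x | u ≤ cdf p x}

lemma quantile_le_iff {u : ℝ} (h0 : 0 < u) (h1 : u < 1) (t : ℝ) :
    quantile p u ≤ t ↔ u ≤ cdf p t := by
  set S := {x | u ≤ cdf p x}
  have hne : S.Nonempty := ((tendsto_cdf_atTop p).eventually_const_le h1).exists
  have hbdd : BddBelow S := by
    obtain ⟨x₀, hx₀⟩ := ((tendsto_cdf_atBot p).eventually_lt_const h0).exists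
    exact ⟨x₀, fun y hy => le_of_not_gt fun h => (hy.trans (monotone_cdf p h.le)).not_gt hx₀⟩
  -- The infimum is attained: approach it from the right and use right-continuity of `cdf p`.
  have hmem : quantile p u ∈ S := by
    have hright : ∀ x ∈ Ioi (quantile p u), u ≤ cdf p x := fun x hx => by
      obtain ⟨s, hs, hsx⟩ := exists_lt_of_csInf_lt hne hx
      exact hs.trans (monotone_cdf p hsx.le)
    exact ge_of_tendsto (((cdf p).right_continuous _).tendsto.mono_left
      (nhdsWithin_mono _ Ioi_subset_Ici_self)) (eventually_nhdsWithin_of_forall hright)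
  exact ⟨fun h => hmem.trans (monotone_cdf p h), fun h => csInf_le hbdd h⟩

lemma monotoneOn_quantile : MonotoneOn (quantile p) (Ioo 0 1) := fun _ hu _ hv huv =>
  (quantile_le_iff p hu.1 hu.2 _).2 <| huv.trans <| (quantile_le_iff p hv.1 hv.2 _).1 le_rfl

lemma aemeasurable_quantile : AEMeasurable (quantile p) (volume.restrict (Icc 0 1)) := by
  rw [← Measure.restrict_congr_set Ioo_ae_eq_Icc]
  exact aemeasurable_restrict_of_monotoneOn measurableSet_Ioo (monotoneOn_quantile p)

theorem map_quantile_volume_restrict_Icc_zero_one [IsProbabilityMeasure p] :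
    (volume.restrict (Icc (0 : ℝ) 1)).map (quantile p) = p := by
  refine Measure.ext_of_Iic _ _ fun t => ?_
  rw [Measure.map_apply_of_aemeasurable (aemeasurable_quantile p) measurableSet_Iic,
    ← ofReal_cdf, ← volume_restrict_Icc_zero_one_Iic (cdf_le_one p t)]
  refine measure_congr ?_
  filter_upwards [ae_restrict_Icc_mem_Ioo 0 1] with u hu
  exact propext (quantile_le_iff p hu.1 hu.2 t)

end ProbabilityTheory

theorem sklar_converse_general
    (m : ℕ) (ν : Measure (Fin m → ℝ)) [IsProbabilityMeasure ν]
    (hmarg : ∀ i : Fin m,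
      ν.map (fun w => w i) = volume.restrict (Set.Icc (0 : ℝ) 1))
    (ρ : Fin m → Measure ℝ) (hρ : ∀ i, IsProbabilityMeasure (ρ i)) :
    ∃ μ : Measure (Fin m → ℝ), IsProbabilityMeasure μ ∧
      (∀ t : Fin m → ℝ,
        (μ {x | ∀ i, x i ≤ t i}).toReal =
          (ν {w | ∀ i, w i ≤ (ρ i (Set.Iic (t i))).toReal}).toReal) ∧
      (∀ i : Fin m, ∀ s : ℝ,
        (μ {x | x i ≤ s}).toReal = (ρ i (Set.Iic s)).toReal) := by
  have hcoord : ∀ i, AEMeasurable (fun w : Fin m → ℝ => w i) ν := fun i =>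
    (measurable_pi_apply i).aemeasurable
  have hquantile : ∀ i, AEMeasurable (quantile (ρ i)) (ν.map fun w => w i) := fun i =>
    (hmarg i).symm ▸ aemeasurable_quantile (ρ i)
  have hT : AEMeasurable (fun w i => quantile (ρ i) (w i)) ν :=
    aemeasurable_pi_lambda _ fun i => (hquantile i).comp_aemeasurable (hcoord i)
  have hae : ∀ᵐ w ∂ν, ∀ i, w i ∈ Ioo 0 1 := ae_all_iff.2 fun i =>
    ae_of_ae_map (hcoord i) ((hmarg i).symm ▸ ae_restrict_Icc_mem_Ioo 0 1)
  refine ⟨ν.map fun w i => quantile (ρ i) (w i), Measure.isProbabilityMeasure_map hT,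
    fun t => ?_, fun i s => ?_⟩
  · have hIic : MeasurableSet {x : Fin m → ℝ | ∀ i, x i ≤ t i} := measurableSet_Iic
    rw [Measure.map_apply_of_aemeasurable hT hIic]
    congr 1
    refine measure_congr ?_
    filter_upwards [hae] with w hw
    refine propext (forall_congr' fun i => ?_)
    rw [← measureReal_def, ← cdf_eq_real]
    exact quantile_le_iff _ (hw i).1 (hw i).2 _
  · have hmarginal : (ν.map fun w i => quantile (ρ i) (w i)).map (fun x => x i) = ρ i := by
      rw [AEMeasurable.map_map_of_aemeasurable (measurable_pi_apply i).aemeasurable hT,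
        ← map_quantile_volume_restrict_Icc_zero_one (ρ i), ← hmarg i,
        (hquantile i).map_map_of_aemeasurable (hcoord i)]
      rfl
    rw [← hmarginal, Measure.map_apply (measurable_pi_apply i) measurableSet_Iic]
    rfl

/-- Sklar's theorem, converse direction: given a copula, realized as the distribution
function of a probability measure `ν` on `[0,1]^m` with uniform marginals, and given
one-dimensional distribution functions `F₁, …, F_m` of probability measures on `ℝ`,
there is a probability measure on `ℝ^m` whose joint distribution function is
`t ↦ C(F₁(t₁), …, F_m(t_m))` and whose marginals have distribution functions `F₁, …, F_m`. -/
theorem sklar_converse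
    (m : ℕ) (hm : 2 ≤ m) (ν : Measure (Fin m → ℝ)) [IsProbabilityMeasure ν]
    (hmarg : ∀ i : Fin m,
      ν.map (fun w => w i) = volume.restrict (Set.Icc (0 : ℝ) 1))
    (ρ : Fin m → Measure ℝ) (hρ : ∀ i, IsProbabilityMeasure (ρ i)) :
    ∃ μ : Measure (Fin m → ℝ), IsProbabilityMeasure μ ∧
      (∀ t : Fin m → ℝ,
        (μ {x | ∀ i, x i ≤ t i}).toReal =
          (ν {w | ∀ i, w i ≤ (ρ i (Set.Iic (t i))).toReal}).toReal) ∧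
      (∀ i : Fin m, ∀ s : ℝ,
        (μ {x | x i ≤ s}).toReal = (ρ i (Set.Iic s)).toReal) :=
  sklar_converse_general m ν hmarg ρ hρ
end

section
/- Let h ∈ (0,1) and let (α_k)_{k≥1} be a sequence of positive reals with Σ_{k≥1} 1/α_k < ∞. Let (X_k)_{k≥1} be random variables on a probability space such that X_k has the Beta(α_k h, α_k(1−h)) distribution for every k. Then X_k → h almost surely as k → ∞. -/
open MeasureTheory Filter

/-- The Beta(p, q) distribution on `ℝ`: the measure on `(0,1)` with density
`x ^ (p-1) * (1-x) ^ (q-1) / B(p,q)` where `B(p,q) = Γ(p)Γ(q)/Γ(p+q)`. -/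
noncomputable def betaMeasure (p q : ℝ) : Measure ℝ :=
  (volume.restrict (Set.Ioo (0 : ℝ) 1)).withDensity fun x =>
    ENNReal.ofReal
      (Real.Gamma (p + q) / (Real.Gamma p * Real.Gamma q) *
        x ^ (p - 1) * (1 - x) ^ (q - 1))


/-! For `p = a h` and `q = a (1 - h)` the Beta(p, q) law has mean `h` and variance
`h (1 - h) / (a + 1)`, so `∑ₖ 𝔼 |X_k - h|²` is finite. Hence `∑ₖ |X_k - h|²` is integrable,
thus finite almost surely, and its terms tend to `0`. -/

open Set Topology
open scoped ENNReal
open ProbabilityTheory (beta beta_pos lintegral_betaPDF lintegral_betaPDF_eq_one)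

theorem ae_tendsto_of_tsum_lintegral_edist_rpow_ne_top {Ω E : Type*} [MeasurableSpace Ω]
    {μ : Measure Ω} [PseudoEMetricSpace E] [MeasurableSpace E] [OpensMeasurableSpace E]
    {X : ℕ → Ω → E} {c : E} {p : ℝ} (hp : 0 < p) (hX : ∀ k, AEMeasurable (X k) μ)
    (hsum : ∑' k, ∫⁻ ω, edist (X k ω) c ^ p ∂μ ≠ ∞) :
    ∀ᵐ ω ∂μ, Tendsto (fun k => X k ω) atTop (𝓝 c) := by
  have hmeas : ∀ k, AEMeasurable (fun ω => edist (X k ω) c ^ p) μ := fun k =>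
    (measurable_edist_left.comp_aemeasurable (hX k)).pow_const p
  have hfin : ∀ᵐ ω ∂μ, ∑' k, edist (X k ω) c ^ p < ∞ := by
    refine ae_lt_top' (AEMeasurable.tsum hmeas) ?_
    rwa [lintegral_tsum hmeas]
  filter_upwards [hfin] with ω hω
  have hpow := ENNReal.tendsto_atTop_zero_of_tsum_ne_top hω.ne
  have := ((ENNReal.continuous_rpow_const (y := p⁻¹)).tendsto 0).comp hpow
  rw [tendsto_iff_edist_tendsto_0]
  simpa [Function.comp_def, ENNReal.rpow_rpow_inv hp.ne', ENNReal.zero_rpow_of_pos (inv_pos.2 hp)]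
    using this

lemma rpow_mul_one_sub_rpow_nonneg {x : ℝ} (hx : x ∈ Icc 0 1) (p q : ℝ) :
    0 ≤ x ^ (p - 1) * (1 - x) ^ (q - 1) :=
  mul_nonneg (Real.rpow_nonneg hx.1 _) (Real.rpow_nonneg (sub_nonneg.2 hx.2) _)

lemma ae_restrict_Ioo_rpow_mul_one_sub_rpow_nonneg (p q : ℝ) :
    0 ≤ᵐ[volume.restrict (Ioo (0 : ℝ) 1)] fun x => x ^ (p - 1) * (1 - x) ^ (q - 1) :=
  ae_restrict_of_forall_mem measurableSet_Ioo fun _ hx =>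
    rpow_mul_one_sub_rpow_nonneg (Ioo_subset_Icc_self hx) p q

section BetaIntegral

variable {p q : ℝ}

lemma lintegral_Ioo_rpow_mul_one_sub_rpow (hp : 0 < p) (hq : 0 < q) :
    ∫⁻ x in Ioo 0 1, ENNReal.ofReal (x ^ (p - 1) * (1 - x) ^ (q - 1)) =
      ENNReal.ofReal (beta p q) := by
  have hB := beta_pos hp hq
  have h1 := lintegral_betaPDF_eq_one hp hq
  simp_rw [lintegral_betaPDF, mul_assoc, ENNReal.ofReal_mul (one_div_pos.2 hB).le] at h1
  rw [lintegral_const_mul' _ _ ENNReal.ofReal_ne_top, ENNReal.ofReal_div_of_pos hB,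
    ENNReal.ofReal_one, one_div, mul_comm] at h1
  rw [ENNReal.eq_inv_of_mul_eq_one_left h1, inv_inv]

lemma integrableOn_Ioo_rpow_mul_one_sub_rpow (hp : 0 < p) (hq : 0 < q) :
    IntegrableOn (fun x : ℝ => x ^ (p - 1) * (1 - x) ^ (q - 1)) (Ioo 0 1) :=
  ⟨by fun_prop,
    (hasFiniteIntegral_iff_ofReal (ae_restrict_Ioo_rpow_mul_one_sub_rpow_nonneg p q)).2
    (by rw [lintegral_Ioo_rpow_mul_one_sub_rpow hp hq]; exact ENNReal.ofReal_lt_top)⟩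

lemma integral_Ioo_rpow_mul_one_sub_rpow (hp : 0 < p) (hq : 0 < q) :
    ∫ x in Ioo 0 1, x ^ (p - 1) * (1 - x) ^ (q - 1) = beta p q := by
  rw [integral_eq_lintegral_of_nonneg_ae (ae_restrict_Ioo_rpow_mul_one_sub_rpow_nonneg p q)
    (by fun_prop), lintegral_Ioo_rpow_mul_one_sub_rpow hp hq,
    ENNReal.toReal_ofReal (beta_pos hp hq).le]

lemma pow_mul_rpow_mul_one_sub_rpow {x : ℝ} (hx : 0 < x) (n : ℕ) :
    x ^ n * (x ^ (p - 1) * (1 - x) ^ (q - 1)) = x ^ (p + n - 1) * (1 - x) ^ (q - 1) := by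
  rw [← mul_assoc, ← Real.rpow_natCast, ← Real.rpow_add hx]
  ring_nf

lemma integrableOn_Ioo_pow_mul_rpow_mul_one_sub_rpow (hp : 0 < p) (hq : 0 < q) (n : ℕ) :
    IntegrableOn (fun x : ℝ => x ^ n * (x ^ (p - 1) * (1 - x) ^ (q - 1))) (Ioo 0 1) :=
  (integrableOn_Ioo_rpow_mul_one_sub_rpow (by positivity) hq).congr_fun
    (fun _ hx => (pow_mul_rpow_mul_one_sub_rpow hx.1 n).symm) measurableSet_Ioo

lemma integral_Ioo_pow_mul_rpow_mul_one_sub_rpow (hp : 0 < p) (hq : 0 < q) (n : ℕ) :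
    ∫ x in Ioo 0 1, x ^ n * (x ^ (p - 1) * (1 - x) ^ (q - 1)) = beta (p + n) q := by
  rw [setIntegral_congr_fun measurableSet_Ioo fun _ hx => pow_mul_rpow_mul_one_sub_rpow hx.1 n]
  exact integral_Ioo_rpow_mul_one_sub_rpow (by positivity) hq

lemma beta_add_one_left (hp : p ≠ 0) (hpq : p + q ≠ 0) :
    beta (p + 1) q = p / (p + q) * beta p q := by
  rw [beta, beta, add_right_comm, Real.Gamma_add_one hp, Real.Gamma_add_one hpq]
  field_simp

lemma integrableOn_Ioo_sq_sub_mul_rpow_mul_one_sub_rpow (hp : 0 < p) (hq : 0 < q) (h : ℝ) :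
    IntegrableOn (fun x : ℝ => (x - h) ^ 2 * (x ^ (p - 1) * (1 - x) ^ (q - 1))) (Ioo 0 1) := by
  have hint := integrableOn_Ioo_pow_mul_rpow_mul_one_sub_rpow hp hq
  refine (((hint 2).sub ((hint 1).const_mul (2 * h))).add ((hint 0).const_mul (h ^ 2))).congr_fun
    (fun x _ => ?_) measurableSet_Ioo
  simp only [Pi.add_apply, Pi.sub_apply]
  ring

/-- With `m = p / (p + q)` the mean of Beta(p, q), the right-hand side is `B(p, q)` times
variance `m (1 - m) / (p + q + 1)` plus squared bias `(m - h) ^ 2`. -/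
lemma integral_Ioo_sq_sub_mul_rpow_mul_one_sub_rpow (hp : 0 < p) (hq : 0 < q) (h : ℝ) :
    ∫ x in Ioo 0 1, (x - h) ^ 2 * (x ^ (p - 1) * (1 - x) ^ (q - 1)) =
      beta p q * (p / (p + q) * (q / (p + q)) / (p + q + 1) + (p / (p + q) - h) ^ 2) := by
  have hmoment := integral_Ioo_pow_mul_rpow_mul_one_sub_rpow hp hq
  have hint := integrableOn_Ioo_pow_mul_rpow_mul_one_sub_rpow hp hq
  have hexpand : ∀ x : ℝ, (x - h) ^ 2 * (x ^ (p - 1) * (1 - x) ^ (q - 1)) =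
      x ^ 2 * (x ^ (p - 1) * (1 - x) ^ (q - 1))
        - 2 * h * (x ^ 1 * (x ^ (p - 1) * (1 - x) ^ (q - 1)))
        + h ^ 2 * (x ^ 0 * (x ^ (p - 1) * (1 - x) ^ (q - 1))) := fun x => by ring
  simp_rw [hexpand]
  rw [integral_add (by exact (hint 2).sub ((hint 1).const_mul _)) ((hint 0).const_mul _),
    integral_sub (hint 2) ((hint 1).const_mul _), integral_const_mul, integral_const_mul,
    hmoment, hmoment, hmoment]
  push_cast
  rw [show p + 2 = p + 1 + 1 by ring, beta_add_one_left (by positivity) (by positivity),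
    beta_add_one_left hp.ne' (by positivity), add_zero]
  field_simp
  ring

lemma lintegral_sq_sub_betaMeasure (hp : 0 < p) (hq : 0 < q) (h : ℝ) :
    ∫⁻ x, ENNReal.ofReal ((x - h) ^ 2) ∂betaMeasure p q =
      ENNReal.ofReal (p / (p + q) * (q / (p + q)) / (p + q + 1) + (p / (p + q) - h) ^ 2) := by
  have hB := beta_pos hp hq
  have hc : Real.Gamma (p + q) / (Real.Gamma p * Real.Gamma q) = (beta p q)⁻¹ := by
    rw [beta, inv_div]
  have hk : ∀ x ∈ Ioo (0 : ℝ) 1, 0 ≤ x ^ (p - 1) * (1 - x) ^ (q - 1) :=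
    fun x hx => rpow_mul_one_sub_rpow_nonneg (Ioo_subset_Icc_self hx) p q
  have hdensity : ∀ x ∈ Ioo (0 : ℝ) 1,
      ENNReal.ofReal (Real.Gamma (p + q) / (Real.Gamma p * Real.Gamma q) *
        x ^ (p - 1) * (1 - x) ^ (q - 1)) * ENNReal.ofReal ((x - h) ^ 2) =
      ENNReal.ofReal ((beta p q)⁻¹ * ((x - h) ^ 2 * (x ^ (p - 1) * (1 - x) ^ (q - 1)))) := by
    intro x hx
    rw [hc, mul_assoc, ← ENNReal.ofReal_mul (mul_nonneg (inv_nonneg.2 hB.le) (hk x hx))]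
    ring_nf
  rw [betaMeasure, lintegral_withDensity_eq_lintegral_mul _ (by fun_prop) (by fun_prop)]
  simp only [Pi.mul_apply]
  rw [setLIntegral_congr_fun measurableSet_Ioo hdensity, ← ofReal_integral_eq_lintegral_ofReal
    ((integrableOn_Ioo_sq_sub_mul_rpow_mul_one_sub_rpow hp hq h).const_mul _)
    (ae_restrict_of_forall_mem measurableSet_Ioo fun x hx =>
      mul_nonneg (inv_nonneg.2 hB.le) (mul_nonneg (sq_nonneg _) (hk x hx))),
    integral_const_mul, integral_Ioo_sq_sub_mul_rpow_mul_one_sub_rpow hp hq,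
    inv_mul_cancel_left₀ hB.ne']

end BetaIntegral

lemma lintegral_edist_sq_betaMeasure_mul {a h : ℝ} (ha : 0 < a) (hh : h ∈ Ioo 0 1) :
    ∫⁻ x, edist x h ^ (2 : ℝ) ∂betaMeasure (a * h) (a * (1 - h)) =
      ENNReal.ofReal (h * (1 - h) / (a + 1)) := by
  obtain ⟨hh0, hh1⟩ := hh
  have hedist : ∀ x : ℝ, edist x h ^ (2 : ℝ) = ENNReal.ofReal ((x - h) ^ 2) := fun x => by
    rw [ENNReal.rpow_two, edist_dist, Real.dist_eq, ← ENNReal.ofReal_pow (abs_nonneg _), sq_abs]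
  simp_rw [hedist]
  rw [lintegral_sq_sub_betaMeasure (mul_pos ha hh0) (mul_pos ha (sub_pos.2 hh1))]
  congr 1
  field_simp
  ring

theorem beta_tendsto_ae_general
    {Ω : Type*} [MeasurableSpace Ω] (μ : Measure Ω)
    (h : ℝ) (hh : h ∈ Set.Ioo (0 : ℝ) 1)
    (α : ℕ → ℝ) (hα : ∀ k, 0 < α k) (hsum : Summable fun k => 1 / α k)
    (X : ℕ → Ω → ℝ) (hX : ∀ k, Measurable (X k))
    (hlaw : ∀ k, μ.map (X k) = betaMeasure (α k * h) (α k * (1 - h))) :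
    ∀ᵐ ω ∂μ, Tendsto (fun k => X k ω) atTop (nhds h) := by
  have hcoeff : 0 ≤ h * (1 - h) := mul_nonneg hh.1.le (sub_nonneg.2 hh.2.le)
  have hmoment : ∀ k, ∫⁻ ω, edist (X k ω) h ^ (2 : ℝ) ∂μ =
      ENNReal.ofReal (h * (1 - h) / (α k + 1)) := fun k => by
    rw [← lintegral_map (f := fun x => edist x h ^ (2 : ℝ)) (by fun_prop) (hX k), hlaw k,
      lintegral_edist_sq_betaMeasure_mul (hα k) hh]
  have hnonneg : ∀ k, 0 ≤ h * (1 - h) / (α k + 1) := fun k =>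
    div_nonneg hcoeff (by linarith [hα k])
  have hsummable : Summable fun k => h * (1 - h) / (α k + 1) :=
    (hsum.mul_left (h * (1 - h))).of_nonneg_of_le hnonneg fun k => by
      rw [mul_one_div]
      exact div_le_div_of_nonneg_left hcoeff (hα k) (by linarith)
  refine ae_tendsto_of_tsum_lintegral_edist_rpow_ne_top two_pos (fun k => (hX k).aemeasurable) ?_
  simp_rw [hmoment, ← ENNReal.ofReal_tsum_of_nonneg hnonneg hsummable]
  exact ENNReal.ofReal_ne_top

/-- If `X_k ~ Beta(α_k h, α_k (1−h))` with `Σ 1/α_k < ∞`, then `X_k → h` almost surely. -/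
theorem beta_tendsto_ae
    {Ω : Type*} [MeasurableSpace Ω] (μ : Measure Ω) [IsProbabilityMeasure μ]
    (h : ℝ) (hh : h ∈ Set.Ioo (0 : ℝ) 1)
    (α : ℕ → ℝ) (hα : ∀ k, 0 < α k) (hsum : Summable fun k => 1 / α k)
    (X : ℕ → Ω → ℝ) (hX : ∀ k, Measurable (X k))
    (hlaw : ∀ k, μ.map (X k) = betaMeasure (α k * h) (α k * (1 - h))) :
    ∀ᵐ ω ∂μ, Tendsto (fun k => X k ω) atTop (nhds h) :=
  beta_tendsto_ae_general μ h hh α hα hsum X hX hlaw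
end

section
/- Let m ≥ 1 and let μ and ν be probability measures on ℝ^m with finite first moments, i.e. ∫‖x‖ dμ(x) < ∞ and ∫‖y‖ dν(y) < ∞, where ‖·‖ is the Euclidean norm. Then the energy distance d_E(μ, ν) = 2∫∫‖x − y‖ dμ(x) dν(y) − ∫∫‖x − x'‖ dμ(x) dμ(x') − ∫∫‖y − y'‖ dν(y) dν(y') satisfies d_E(μ, ν) ≥ 0. -/
/-!
For `r ≥ 0` one has `c * r = ∫₀^∞ s^(-3/2) (1 - e^(-s r²)) ds` with `0 < c < ∞`, so by Fubini
`c * d_E(μ, ν) = ∫₀^∞ s^(-3/2) (K_s(μ, μ) + K_s(ν, ν) - 2 K_s(μ, ν)) ds`, where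
`K_s(μ, ν) = ∫∫ e^(-s‖x - y‖²) dν dμ`. Each Gaussian kernel is positive definite: by the
parallelogram law `e^(-s‖x - y‖²)` is a positive multiple of `∫ e^(-2s‖z - x‖²) e^(-2s‖z - y‖²) dz`,
so `K_s(μ, μ) + K_s(ν, ν) - 2 K_s(μ, ν)` is a positive multiple of `∫ (f_μ - f_ν)² dz` with
`f_μ(z) = ∫ e^(-2s‖z - x‖²) dμ(x)`.
-/

open MeasureTheory Real Set

noncomputable def normIntegralConst : ℝ := ∫ s in Ioi (0 : ℝ), s ^ (-(3 / 2) : ℝ) * (1 - exp (-s))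

theorem rpow_mul_one_sub_exp_neg_nonneg {s t : ℝ} (hs : 0 ≤ s) (ht : 0 ≤ t) :
    0 ≤ s ^ (-(3 / 2) : ℝ) * (1 - exp (-t)) :=
  mul_nonneg (rpow_nonneg hs _) (sub_nonneg.mpr (exp_le_one_iff.mpr (neg_nonpos.mpr ht)))

theorem integrableOn_rpow_mul_one_sub_exp_neg :
    IntegrableOn (fun s : ℝ => s ^ (-(3 / 2) : ℝ) * (1 - exp (-s))) (Ioi 0) := by
  have hmeas : AEStronglyMeasurable (fun s : ℝ => s ^ (-(3 / 2) : ℝ) * (1 - exp (-s))) :=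
    (by fun_prop : Measurable _).aestronglyMeasurable
  rw [← Ioc_union_Ioi_eq_Ioi zero_le_one]
  refine IntegrableOn.union ?_ ?_
  · have hbound : IntegrableOn (fun s : ℝ => s ^ (-(1 / 2) : ℝ)) (Ioc 0 1) :=
      (intervalIntegrable_iff_integrableOn_Ioc_of_le zero_le_one).mp
        (intervalIntegral.intervalIntegrable_rpow' (by norm_num))
    refine hbound.mono' hmeas.restrict (ae_restrict_of_forall_mem measurableSet_Ioc fun s hs => ?_)
    rw [norm_of_nonneg (rpow_mul_one_sub_exp_neg_nonneg hs.1.le hs.1.le)]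
    calc s ^ (-(3 / 2) : ℝ) * (1 - exp (-s)) ≤ s ^ (-(3 / 2) : ℝ) * s ^ (1 : ℝ) := by
          gcongr
          · exact rpow_nonneg hs.1.le _
          · rw [rpow_one]; linarith [add_one_le_exp (-s)]
      _ = s ^ (-(1 / 2) : ℝ) := by rw [← rpow_add hs.1]; norm_num
  · refine (integrableOn_Ioi_rpow_of_lt (by norm_num : (-(3 / 2) : ℝ) < -1) zero_lt_one).mono'
      hmeas.restrict (ae_restrict_of_forall_mem measurableSet_Ioi fun s hs => ?_)
    have hs0 : (0 : ℝ) < s := zero_lt_one.trans hs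
    rw [norm_of_nonneg (rpow_mul_one_sub_exp_neg_nonneg hs0.le hs0.le)]
    exact mul_le_of_le_one_right (rpow_nonneg hs0.le _) (by linarith [exp_pos (-s)])

theorem normIntegralConst_pos : 0 < normIntegralConst := by
  rw [normIntegralConst, setIntegral_pos_iff_support_of_nonneg_ae
    (ae_restrict_of_forall_mem measurableSet_Ioi fun s hs =>
      rpow_mul_one_sub_exp_neg_nonneg (le_of_lt hs) (le_of_lt hs))
    integrableOn_rpow_mul_one_sub_exp_neg]
  refine (Measure.measure_Ioi_pos _ (0 : ℝ)).trans_le (measure_mono fun s hs => ⟨?_, hs⟩)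
  exact (mul_pos (rpow_pos_of_pos hs _) (by simpa using hs)).ne'

theorem rpow_mul_one_sub_exp_neg_mul_sq_eq {r s : ℝ} (hr : 0 < r) (hs : 0 < s) :
    s ^ (-(3 / 2) : ℝ) * (1 - exp (-(s * r ^ 2))) =
      r ^ 3 * ((r ^ 2 * s) ^ (-(3 / 2) : ℝ) * (1 - exp (-(r ^ 2 * s)))) := by
  rw [mul_rpow (by positivity) hs.le, ← rpow_natCast r 2, ← rpow_mul hr.le, mul_comm s (r ^ _),
    show r ^ 3 = r ^ (3 : ℝ) by norm_cast, ← mul_assoc, ← mul_assoc, ← rpow_add hr]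
  norm_num

theorem integrableOn_rpow_mul_one_sub_exp_neg_mul_sq {r : ℝ} (hr : 0 ≤ r) :
    IntegrableOn (fun s : ℝ => s ^ (-(3 / 2) : ℝ) * (1 - exp (-(s * r ^ 2)))) (Ioi 0) := by
  rcases hr.eq_or_lt with rfl | hr
  · simp
  have hscaled : IntegrableOn
      (fun s : ℝ => (r ^ 2 * s) ^ (-(3 / 2) : ℝ) * (1 - exp (-(r ^ 2 * s)))) (Ioi 0) := by
    rw [integrableOn_Ioi_comp_mul_left_iff (fun s => s ^ (-(3 / 2) : ℝ) * (1 - exp (-s))) 0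
      (by positivity), mul_zero]
    exact integrableOn_rpow_mul_one_sub_exp_neg
  exact (integrableOn_congr_fun (fun s hs => rpow_mul_one_sub_exp_neg_mul_sq_eq hr hs)
    measurableSet_Ioi).mpr (hscaled.const_mul _)

theorem integral_rpow_mul_one_sub_exp_neg_mul_sq {r : ℝ} (hr : 0 ≤ r) :
    ∫ s in Ioi 0, s ^ (-(3 / 2) : ℝ) * (1 - exp (-(s * r ^ 2))) = normIntegralConst * r := by
  rcases hr.eq_or_lt with rfl | hr
  · simp
  rw [setIntegral_congr_fun measurableSet_Ioi
      (fun s hs => rpow_mul_one_sub_exp_neg_mul_sq_eq hr hs),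
    integral_const_mul, integral_comp_mul_left_Ioi
      (fun s => s ^ (-(3 / 2) : ℝ) * (1 - exp (-s))) 0 (by positivity),
    mul_zero, ← normIntegralConst, smul_eq_mul]
  field_simp

section FeatureKernel

variable {X Z : Type*} [MeasurableSpace X] [MeasurableSpace Z]
  {μ ν : Measure X} {ρ : Measure Z} [SFinite μ] [SFinite ν] [SFinite ρ] {φ : X → Z → ℝ}

theorem integral_integral_integral_mul_eq
    (h : Integrable (fun q : (X × X) × Z => φ q.1.1 q.2 * φ q.1.2 q.2) ((μ.prod ν).prod ρ)) :
    ∫ x, ∫ y, ∫ z, φ x z * φ y z ∂ρ ∂ν ∂μ = ∫ z, (∫ x, φ x z ∂μ) * ∫ y, φ y z ∂ν ∂ρ := by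
  rw [integral_integral h.integral_prod_left]
  refine (integral_integral_swap h).trans (integral_congr_ae (ae_of_all _ fun z => ?_))
  exact integral_prod_mul (fun x => φ x z) (fun y => φ y z)

theorem two_mul_integral_integral_integral_mul_le
    (hμμ : Integrable (fun q : (X × X) × Z => φ q.1.1 q.2 * φ q.1.2 q.2) ((μ.prod μ).prod ρ))
    (hνν : Integrable (fun q : (X × X) × Z => φ q.1.1 q.2 * φ q.1.2 q.2) ((ν.prod ν).prod ρ))
    (hμν : Integrable (fun q : (X × X) × Z => φ q.1.1 q.2 * φ q.1.2 q.2) ((μ.prod ν).prod ρ)) :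
    2 * ∫ x, ∫ y, ∫ z, φ x z * φ y z ∂ρ ∂ν ∂μ ≤
      (∫ x, ∫ y, ∫ z, φ x z * φ y z ∂ρ ∂μ ∂μ) + ∫ x, ∫ y, ∫ z, φ x z * φ y z ∂ρ ∂ν ∂ν := by
  have integrable_mul {α β : Measure X} [SFinite α] [SFinite β]
      (h : Integrable (fun q : (X × X) × Z => φ q.1.1 q.2 * φ q.1.2 q.2) ((α.prod β).prod ρ)) :
      Integrable (fun z => (∫ x, φ x z ∂α) * ∫ y, φ y z ∂β) ρ := by
    refine h.integral_prod_right.congr (ae_of_all _ fun z => ?_)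
    exact integral_prod_mul (fun x => φ x z) (fun y => φ y z)
  rw [integral_integral_integral_mul_eq hμμ, integral_integral_integral_mul_eq hνν,
    integral_integral_integral_mul_eq hμν, ← integral_const_mul,
    ← integral_add (integrable_mul hμμ) (integrable_mul hνν)]
  exact integral_mono ((integrable_mul hμν).const_mul 2)
    ((integrable_mul hμμ).add (integrable_mul hνν))
    fun z => by nlinarith [sq_nonneg ((∫ x, φ x z ∂μ) - ∫ y, φ y z ∂ν)]

end FeatureKernel

noncomputable def energyDistance {E : Type*} [NormedAddCommGroup E] [MeasurableSpace E]
    (μ ν : Measure E) : ℝ :=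
  2 * ∫ x, ∫ y, ‖x - y‖ ∂ν ∂μ - ∫ x, ∫ x', ‖x - x'‖ ∂μ ∂μ - ∫ y, ∫ y', ‖y - y'‖ ∂ν ∂ν

section InnerProductSpace

variable {V : Type*} [NormedAddCommGroup V] [InnerProductSpace ℝ V]

theorem exp_neg_mul_sq_norm_sub_mul_exp (s : ℝ) (x y z : V) :
    exp (-(2 * s) * ‖z - x‖ ^ 2) * exp (-(2 * s) * ‖z - y‖ ^ 2) =
      exp (-(s * ‖x - y‖ ^ 2)) * exp (-(4 * s) * ‖z - midpoint ℝ x y‖ ^ 2) := by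
  have hsum : z - x + (z - y) = (2 : ℝ) • (z - midpoint ℝ x y) := by
    rw [midpoint_eq_smul_add, invOf_eq_inv]; module
  have hpar := parallelogram_law_with_norm ℝ (z - x) (z - y)
  rw [hsum, norm_smul, sub_sub_sub_cancel_left, norm_sub_rev y x] at hpar
  rw [← exp_add, ← exp_add]
  congr 1
  norm_num at hpar
  linear_combination s * hpar

variable [FiniteDimensional ℝ V] [MeasurableSpace V] [BorelSpace V]

theorem integrable_exp_neg_mul_sq_norm {b : ℝ} (hb : 0 < b) :
    Integrable (fun v : V => exp (-b * ‖v‖ ^ 2)) :=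
  Integrable.of_integral_ne_zero <| by
    rw [GaussianFourier.integral_rexp_neg_mul_sq_norm hb]; positivity

theorem integral_exp_neg_mul_sq_norm_sub_mul_exp {s : ℝ} (hs : 0 < s) (x y : V) :
    ∫ z, exp (-(2 * s) * ‖z - x‖ ^ 2) * exp (-(2 * s) * ‖z - y‖ ^ 2) =
      (π / (4 * s)) ^ (Module.finrank ℝ V / 2 : ℝ) * exp (-(s * ‖x - y‖ ^ 2)) := by
  simp_rw [exp_neg_mul_sq_norm_sub_mul_exp s x y]
  rw [integral_const_mul, integral_sub_right_eq_self (fun z => exp (-(4 * s) * ‖z‖ ^ 2)),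
    GaussianFourier.integral_rexp_neg_mul_sq_norm (by positivity), mul_comm]

theorem integrable_exp_neg_mul_sq_norm_sub_mul_exp {s : ℝ} (hs : 0 < s) (x y : V) :
    Integrable (fun z => exp (-(2 * s) * ‖z - x‖ ^ 2) * exp (-(2 * s) * ‖z - y‖ ^ 2)) := by
  simp_rw [exp_neg_mul_sq_norm_sub_mul_exp s x y]
  exact ((integrable_exp_neg_mul_sq_norm (by positivity)).comp_sub_right _).const_mul _

theorem integrable_exp_neg_mul_sq_norm_sub {s : ℝ} (hs : 0 ≤ s)
    (μ ν : Measure V) [IsFiniteMeasure μ] [IsFiniteMeasure ν] :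
    Integrable (fun p : V × V => exp (-(s * ‖p.1 - p.2‖ ^ 2))) (μ.prod ν) := by
  refine (integrable_const 1).mono' (by fun_prop) (ae_of_all _ fun p => ?_)
  rw [norm_of_nonneg (exp_pos _).le, exp_le_one_iff, neg_nonpos]
  positivity

theorem integrable_prod_exp_neg_mul_sq_norm_sub_mul_exp {s : ℝ} (hs : 0 < s)
    (μ ν : Measure V) [IsFiniteMeasure μ] [IsFiniteMeasure ν] :
    Integrable (fun q : (V × V) × V =>
      exp (-(2 * s) * ‖q.2 - q.1.1‖ ^ 2) * exp (-(2 * s) * ‖q.2 - q.1.2‖ ^ 2))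
      ((μ.prod ν).prod volume) := by
  rw [integrable_prod_iff (by fun_prop)]
  refine ⟨ae_of_all _ fun p => integrable_exp_neg_mul_sq_norm_sub_mul_exp hs p.1 p.2, ?_⟩
  simp only [norm_mul, norm_of_nonneg (exp_pos _).le,
    integral_exp_neg_mul_sq_norm_sub_mul_exp hs]
  exact (integrable_exp_neg_mul_sq_norm_sub hs.le μ ν).const_mul _

noncomputable def gaussianKernelMean (s : ℝ) (μ ν : Measure V) : ℝ :=
  ∫ x, ∫ y, exp (-(s * ‖x - y‖ ^ 2)) ∂ν ∂μ

theorem two_mul_gaussianKernelMean_le {s : ℝ} (hs : 0 < s)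
    (μ ν : Measure V) [IsFiniteMeasure μ] [IsFiniteMeasure ν] :
    2 * gaussianKernelMean s μ ν ≤ gaussianKernelMean s μ μ + gaussianKernelMean s ν ν := by
  have h := two_mul_integral_integral_integral_mul_le
    (φ := fun x z => exp (-(2 * s) * ‖z - x‖ ^ 2))
    (integrable_prod_exp_neg_mul_sq_norm_sub_mul_exp hs μ μ)
    (integrable_prod_exp_neg_mul_sq_norm_sub_mul_exp hs ν ν)
    (integrable_prod_exp_neg_mul_sq_norm_sub_mul_exp hs μ ν)
  simp only [integral_exp_neg_mul_sq_norm_sub_mul_exp hs, integral_const_mul] at h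
  rw [mul_left_comm, ← mul_add] at h
  exact le_of_mul_le_mul_left h (by positivity)

variable {μ ν : Measure V}

theorem integrable_norm_sub_prod [IsFiniteMeasure μ] [IsFiniteMeasure ν]
    (hμ : Integrable (fun x => ‖x‖) μ) (hν : Integrable (fun y => ‖y‖) ν) :
    Integrable (fun p : V × V => ‖p.1 - p.2‖) (μ.prod ν) := by
  have hμ' : Integrable id μ := (integrable_norm_iff aestronglyMeasurable_id).mp hμ
  have hν' : Integrable id ν := (integrable_norm_iff aestronglyMeasurable_id).mp hν
  exact ((hμ'.comp_fst ν).sub (hν'.comp_snd μ)).norm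

theorem integrable_prod_rpow_mul_one_sub_exp [IsFiniteMeasure μ] [IsFiniteMeasure ν]
    (hμ : Integrable (fun x => ‖x‖) μ) (hν : Integrable (fun y => ‖y‖) ν) :
    Integrable
      (fun q : (V × V) × ℝ => q.2 ^ (-(3 / 2) : ℝ) * (1 - exp (-(q.2 * ‖q.1.1 - q.1.2‖ ^ 2))))
      ((μ.prod ν).prod (volume.restrict (Ioi 0))) := by
  have hmeas : Measurable fun q : (V × V) × ℝ =>
      q.2 ^ (-(3 / 2) : ℝ) * (1 - exp (-(q.2 * ‖q.1.1 - q.1.2‖ ^ 2))) :=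
    Measurable.mul (by fun_prop) (by fun_prop)
  rw [integrable_prod_iff hmeas.aestronglyMeasurable]
  refine ⟨ae_of_all _ fun p => ?_, ?_⟩
  · exact integrableOn_rpow_mul_one_sub_exp_neg_mul_sq (r := ‖p.1 - p.2‖) (norm_nonneg _)
  have hnorm (p : V × V) :
      ∫ s in Ioi 0, ‖s ^ (-(3 / 2) : ℝ) * (1 - exp (-(s * ‖p.1 - p.2‖ ^ 2)))‖ =
        normIntegralConst * ‖p.1 - p.2‖ := by
    rw [← integral_rpow_mul_one_sub_exp_neg_mul_sq (norm_nonneg _)]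
    exact setIntegral_congr_fun measurableSet_Ioi fun s hs =>
      norm_of_nonneg (rpow_mul_one_sub_exp_neg_nonneg (le_of_lt hs)
        (mul_nonneg (le_of_lt hs) (sq_nonneg _)))
  simp only [hnorm]
  exact (integrable_norm_sub_prod hμ hν).const_mul _

theorem integral_prod_rpow_mul_one_sub_exp [IsProbabilityMeasure μ] [IsProbabilityMeasure ν]
    {s : ℝ} (hs : 0 ≤ s) :
    ∫ p : V × V, s ^ (-(3 / 2) : ℝ) * (1 - exp (-(s * ‖p.1 - p.2‖ ^ 2))) ∂(μ.prod ν) =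
      s ^ (-(3 / 2) : ℝ) * (1 - gaussianKernelMean s μ ν) := by
  rw [integral_const_mul, integral_sub (integrable_const 1)
    (integrable_exp_neg_mul_sq_norm_sub hs μ ν), gaussianKernelMean,
    integral_integral (f := fun x y => exp (-(s * ‖x - y‖ ^ 2)))
      (integrable_exp_neg_mul_sq_norm_sub hs μ ν)]
  simp

theorem integrableOn_rpow_mul_one_sub_gaussianKernelMean
    [IsProbabilityMeasure μ] [IsProbabilityMeasure ν]
    (hμ : Integrable (fun x => ‖x‖) μ) (hν : Integrable (fun y => ‖y‖) ν) :
    IntegrableOn (fun s => s ^ (-(3 / 2) : ℝ) * (1 - gaussianKernelMean s μ ν)) (Ioi 0) :=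
  (integrable_prod_rpow_mul_one_sub_exp hμ hν).integral_prod_right.congr
    (ae_restrict_of_forall_mem measurableSet_Ioi fun _ hs =>
      integral_prod_rpow_mul_one_sub_exp (le_of_lt hs))

theorem integral_rpow_mul_one_sub_gaussianKernelMean
    [IsProbabilityMeasure μ] [IsProbabilityMeasure ν]
    (hμ : Integrable (fun x => ‖x‖) μ) (hν : Integrable (fun y => ‖y‖) ν) :
    ∫ s in Ioi 0, s ^ (-(3 / 2) : ℝ) * (1 - gaussianKernelMean s μ ν) =
      normIntegralConst * ∫ x, ∫ y, ‖x - y‖ ∂ν ∂μ := by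
  rw [← setIntegral_congr_fun measurableSet_Ioi fun _ hs =>
      integral_prod_rpow_mul_one_sub_exp (le_of_lt hs),
    ← integral_integral_swap (integrable_prod_rpow_mul_one_sub_exp hμ hν)]
  simp only [integral_rpow_mul_one_sub_exp_neg_mul_sq (norm_nonneg _), integral_const_mul]
  rw [integral_integral (f := fun x y => ‖x - y‖) (integrable_norm_sub_prod hμ hν)]

theorem energyDistance_nonneg [IsProbabilityMeasure μ] [IsProbabilityMeasure ν]
    (hμ : Integrable (fun x => ‖x‖) μ) (hν : Integrable (fun y => ‖y‖) ν) :
    0 ≤ energyDistance μ ν := by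
  have hμν := integrableOn_rpow_mul_one_sub_gaussianKernelMean hμ hν
  have hμμ := integrableOn_rpow_mul_one_sub_gaussianKernelMean hμ hμ
  have hνν := integrableOn_rpow_mul_one_sub_gaussianKernelMean hν hν
  have hrepr : ∫ s in Ioi 0, (2 * (s ^ (-(3 / 2) : ℝ) * (1 - gaussianKernelMean s μ ν))
      - s ^ (-(3 / 2) : ℝ) * (1 - gaussianKernelMean s μ μ)
      - s ^ (-(3 / 2) : ℝ) * (1 - gaussianKernelMean s ν ν)) =
      normIntegralConst * energyDistance μ ν := by
    rw [integral_sub (by exact (hμν.const_mul 2).sub hμμ) hνν,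
      integral_sub (hμν.const_mul 2) hμμ, integral_const_mul,
      integral_rpow_mul_one_sub_gaussianKernelMean hμ hν,
      integral_rpow_mul_one_sub_gaussianKernelMean hμ hμ,
      integral_rpow_mul_one_sub_gaussianKernelMean hν hν, energyDistance]
    ring
  have hnonneg : 0 ≤ normIntegralConst * energyDistance μ ν := by
    refine hrepr ▸ setIntegral_nonneg measurableSet_Ioi fun s (hs : 0 < s) => ?_
    nlinarith [two_mul_gaussianKernelMean_le hs μ ν, rpow_nonneg hs.le (-(3 / 2) : ℝ)]
  exact nonneg_of_mul_nonneg_right hnonneg normIntegralConst_pos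

end InnerProductSpace

theorem energy_distance_nonneg_general
    (m : ℕ)
    (μ ν : Measure (EuclideanSpace ℝ (Fin m)))
    [IsProbabilityMeasure μ] [IsProbabilityMeasure ν]
    (hμ : Integrable (fun x => ‖x‖) μ) (hν : Integrable (fun y => ‖y‖) ν) :
    0 ≤ 2 * ∫ x, ∫ y, ‖x - y‖ ∂ν ∂μ
        - ∫ x, ∫ x', ‖x - x'‖ ∂μ ∂μ
        - ∫ y, ∫ y', ‖y - y'‖ ∂ν ∂ν :=
  energyDistance_nonneg hμ hν

/-- Nonnegativity of the energy distance between probability measures on `ℝ^m`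
with finite first moments. -/
theorem energy_distance_nonneg
    (m : ℕ) (hm : 1 ≤ m)
    (μ ν : Measure (EuclideanSpace ℝ (Fin m)))
    [IsProbabilityMeasure μ] [IsProbabilityMeasure ν]
    (hμ : Integrable (fun x => ‖x‖) μ) (hν : Integrable (fun y => ‖y‖) ν) :
    0 ≤ 2 * ∫ x, ∫ y, ‖x - y‖ ∂ν ∂μ
        - ∫ x, ∫ x', ‖x - x'‖ ∂μ ∂μ
        - ∫ y, ∫ y', ‖y - y'‖ ∂ν ∂ν :=
  energy_distance_nonneg_general m μ ν hμ hν
end
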